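/- arXiv:2010.10643 — 7 statements merged into one kernel-verified Lean document; each statement's English description precedes it below -/
import Mathlib

section
/- The split sum is not associative: (*1 ∘ E) ∘ *1 ≡ *2, but *1 ∘ (E ∘ *1) ≡ *1. -/
/-- Finite impartial games, given by their (finite list of) options. -/
inductive IGame : Type where
  | mk : List IGame → IGame

/-- The empty game `E`, with no options. -/
abbrev E : IGame := .mk []

/-- The list of options of a game. -/
def IGame.opts : IGame → List IGame
  | .mk l => l

theorem IGame.sizeOf_lt_of_mem {g : IGame} {l : List IGame} (h : g ∈ l) :
    sizeOf g < sizeOf (IGame.mk l) := by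
  have := List.sizeOf_lt_of_mem h
  simp only [IGame.mk.sizeOf_spec]; omega

/-- The pass operator: `E* = E`; for `G` with options, `G*` has options
`G` together with `g*` for each option `g` of `G`. -/
def pass : IGame → IGame
  | .mk [] => .mk []
  | .mk l => .mk (.mk l :: l.attach.map fun g => pass g.1)
decreasing_by
  exact IGame.sizeOf_lt_of_mem g.2

/-- The split sum `G ∘ H`. -/
def split : IGame → IGame → IGame
  | .mk [], _ => .mk []
  | .mk gs, .mk [] => .mk gs
  | .mk gs, .mk hs =>
      .mk ((hs.attach.map fun h => split (.mk gs) h.1) ++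
           (gs.attach.map fun g => split g.1 (.mk hs)))
termination_by G H => sizeOf G + sizeOf H
decreasing_by
  · have := IGame.sizeOf_lt_of_mem h.2; omega
  · have := IGame.sizeOf_lt_of_mem g.2; omega

/-- Disjunctive sum of games. -/
def addG : IGame → IGame → IGame
  | .mk gs, .mk hs =>
      .mk ((gs.attach.map fun g => addG g.1 (.mk hs)) ++
           (hs.attach.map fun h => addG (.mk gs) h.1))
termination_by G H => sizeOf G + sizeOf H
decreasing_by
  · have := IGame.sizeOf_lt_of_mem g.2; omega
  · have := IGame.sizeOf_lt_of_mem h.2; omega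

/-- The nimber `*n`, with options `*0, …, *(n-1)`. -/
def star : ℕ → IGame
  | n => .mk ((List.range n).attach.map fun k => star k.1)
termination_by n => n
decreasing_by have := List.mem_range.mp k.2; omega

/-- `G` is a P-position (previous player wins under normal play):
every option is an N-position. -/
def PPos : IGame → Prop
  | .mk l => ∀ g ∈ l.attach, ¬ PPos g.1
decreasing_by exact IGame.sizeOf_lt_of_mem g.2

/-- Identity of game trees (extensionally: same set of options, recursively). -/
def Ident : IGame → IGame → Prop
  | .mk gs, .mk hs =>
      (∀ g ∈ gs.attach, ∃ h ∈ hs.attach, Ident g.1 h.1) ∧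
      (∀ h ∈ hs.attach, ∃ g ∈ gs.attach, Ident g.1 h.1)
termination_by G H => sizeOf G + sizeOf H
decreasing_by
  · have := IGame.sizeOf_lt_of_mem g.2
    have := IGame.sizeOf_lt_of_mem h.2; omega
  · have := IGame.sizeOf_lt_of_mem g.2
    have := IGame.sizeOf_lt_of_mem h.2; omega

/-! `E` is absorbing on the left and neutral on the right for `∘`. Hence `(*1 ∘ E) ∘ *1 = *1 ∘ *1`,
whose options are `*1 ∘ E = *1` and `E ∘ *1 = E`, i.e. the game `*2`; while
`*1 ∘ (E ∘ *1) = *1 ∘ E = *1`. -/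

namespace IGame

theorem ident_mk_iff {gs hs : List IGame} :
    Ident (mk gs) (mk hs) ↔
      (∀ g ∈ gs, ∃ h ∈ hs, Ident g h) ∧ (∀ h ∈ hs, ∃ g ∈ gs, Ident g h) := by
  rw [Ident]
  simp only [List.mem_attach, true_implies, Subtype.forall, Subtype.exists, exists_prop,
    true_and]

theorem ident_refl : ∀ G : IGame, Ident G G
  | mk l => ident_mk_iff.2
      ⟨fun g hg => ⟨g, hg, ident_refl g⟩, fun h hh => ⟨h, hh, ident_refl h⟩⟩
decreasing_by all_goals exact sizeOf_lt_of_mem ‹_›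

theorem ident_mk_of_subset {gs hs : List IGame} (hgs : gs ⊆ hs) (hhs : hs ⊆ gs) :
    Ident (mk gs) (mk hs) :=
  ident_mk_iff.2
    ⟨fun g hg => ⟨g, hgs hg, ident_refl g⟩, fun h hh => ⟨h, hhs hh, ident_refl h⟩⟩

theorem not_ident_mk_cons_E (g : IGame) (gs : List IGame) : ¬ Ident (mk (g :: gs)) E := by
  intro h
  obtain ⟨_, hmem, -⟩ := (ident_mk_iff.1 h).1 g List.mem_cons_self
  exact List.not_mem_nil hmem

theorem E_split (H : IGame) : split E H = E := by
  rw [split]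

theorem split_E : ∀ G : IGame, split G E = G
  | mk [] => by rw [split]
  | mk (g :: gs) => by
    rw [split]
    exact List.cons_ne_nil g gs

theorem star_eq (n : ℕ) : (star n : IGame) = mk ((List.range n).map star) := by
  rw [_root_.star, List.attach_map_val (f := star)]

theorem star_one : (star 1 : IGame) = mk [E] := by
  simp [star_eq]

theorem star_two : (star 2 : IGame) = mk [E, star 1] := by
  simp [star_eq, List.range_succ]

theorem split_star_one_self : split (star 1) (star 1) = mk [star 1, E] := by
  rw [star_one, split] <;> simp [E_split, split_E]

end IGame

/-- the split sum is not associative: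
`(*1 ∘ E) ∘ *1 ≡ *2` but `*1 ∘ (E ∘ *1) ≡ *1`. -/
theorem split_not_associative :
    Ident (split (split (star 1) E) (star 1)) (star 2) ∧
    Ident (split (star 1) (split E (star 1))) (star 1) ∧
    ¬ Ident (split (split (star 1) E) (star 1)) (split (star 1) (split E (star 1))) := by
  rw [IGame.split_E, IGame.E_split, IGame.split_E,
    IGame.split_star_one_self]
  refine ⟨?_, IGame.ident_refl _, ?_⟩
  · rw [IGame.star_two]
    exact IGame.ident_mk_of_subset (by simp) (by simp)
  · rw [IGame.star_one, IGame.ident_mk_iff]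
    simp [IGame.not_ident_mk_cons_E]
end

section
/- If G and H are both P-positions (previous-player wins under normal play), then the split sum G ∘ H is also a P-position. -/
/-! In `G ∘ H` with both components P-positions, the previous player answers a move to `G ∘ h`
by the winning reply `h'` of `h`, and a move to `g ∘ H` by the winning reply `g'` of `g`; this
returns to a split sum of two P-positions of smaller size. The recursion ends at an empty
component, where `E ∘ H = E` and `G ∘ E = G`. -/

namespace IGame

theorem sizeOf_lt_of_mem_opts {g G : IGame} (h : g ∈ G.opts) : sizeOf g < sizeOf G := by
  cases G
  exact sizeOf_lt_of_mem h

theorem ne_E_of_mem_opts {g G : IGame} (h : g ∈ G.opts) : G ≠ E := by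
  rintro rfl
  simp [opts] at h

end IGame

open IGame

theorem PPos_iff {G : IGame} : PPos G ↔ ∀ g ∈ G.opts, ¬PPos g := by
  cases G
  rw [PPos]
  simp [opts]

theorem not_PPos_iff {G : IGame} : ¬PPos G ↔ ∃ g ∈ G.opts, PPos g := by
  simp [PPos_iff (G := G)]

theorem not_PPos_of_mem_opts {g G : IGame} (hg : g ∈ G.opts) (hP : PPos g) : ¬PPos G :=
  not_PPos_iff.2 ⟨g, hg, hP⟩

theorem PPos_E : PPos E :=
  PPos_iff.2 fun _ h => nomatch h

theorem split_E_left (H : IGame) : split E H = E := by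
  rw [split]

theorem split_E_right (G : IGame) : split G E = G := by
  obtain ⟨_ | _⟩ := G <;> simp [split]

theorem opts_split {G H : IGame} (hG : G ≠ E) (hH : H ≠ E) :
    (split G H).opts = H.opts.map (split G) ++ G.opts.map (split · H) := by
  obtain ⟨_ | ⟨g, gs⟩⟩ := G
  · exact absurd rfl hG
  obtain ⟨_ | ⟨h, hs⟩⟩ := H
  · exact absurd rfl hH
  simp [split, opts]

theorem split_mem_opts_split_right {G H h : IGame} (hG : G ≠ E) (hh : h ∈ H.opts) :
    split G h ∈ (split G H).opts := by
  rw [opts_split hG (ne_E_of_mem_opts hh)]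
  exact List.mem_append_left _ (List.mem_map_of_mem hh)

theorem split_mem_opts_split_left {G H g : IGame} (hH : H ≠ E) (hg : g ∈ G.opts) :
    split g H ∈ (split G H).opts := by
  rw [opts_split (ne_E_of_mem_opts hg) hH]
  exact List.mem_append_right _ (List.mem_map_of_mem (f := (split · H)) hg)

/-- if `G` and `H` are P-positions, so is `G ∘ H`. -/
theorem split_PPos_of_PPos (G H : IGame) (hG : PPos G) (hH : PPos H) :
    PPos (split G H) := by
  obtain rfl | hGE := eq_or_ne G E
  · rw [split_E_left]; exact PPos_E
  obtain rfl | hHE := eq_or_ne H E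
  · rwa [split_E_right]
  rw [PPos_iff, opts_split hGE hHE]
  simp only [List.mem_append, List.mem_map]
  rintro _ (⟨h, hh, rfl⟩ | ⟨g, hg, rfl⟩)
  · obtain ⟨h', hh', hh'P⟩ := not_PPos_iff.1 (PPos_iff.1 hH h hh)
    exact not_PPos_of_mem_opts (split_mem_opts_split_right hGE hh')
      (split_PPos_of_PPos G h' hG hh'P)
  · obtain ⟨g', hg', hg'P⟩ := not_PPos_iff.1 (PPos_iff.1 hG g hg)
    exact not_PPos_of_mem_opts (split_mem_opts_split_left hHE hg')
      (split_PPos_of_PPos g' H hg'P hH)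
termination_by sizeOf G + sizeOf H
decreasing_by
  · have := sizeOf_lt_of_mem_opts hh; have := sizeOf_lt_of_mem_opts hh'; omega
  · have := sizeOf_lt_of_mem_opts hg; have := sizeOf_lt_of_mem_opts hg'; omega
end

section
/- For all impartial games G, H, K, the games (G ∘ H) ∘ K and G ∘ (H + K) are equal (i.e., their disjunctive sum is a P-position). -/
/-! `(G ∘ H) ∘ K` and `G ∘ (H + K)` are identical game trees up to the order of options: on both
sides a move is a move in exactly one of `G`, `H`, `K`, because the options of `H + K` are the
moves in `H` and the moves in `K`. When `H` or `K` is `E` the split sums collapse, and `E + K`,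
`H + E` are identical to `K`, `H`. Identical games sum to a P-position: the second player mirrors
every move in the other component. -/

namespace IGame

@[simp]
theorem opts_mk (l : List IGame) : (mk l).opts = l := rfl

@[elab_as_elim]
theorem optsInduction {motive : IGame → Prop}
    (ind : ∀ G, (∀ g ∈ G.opts, motive g) → motive G) (G : IGame) : motive G :=
  ind G fun g _ => optsInduction ind g
termination_by sizeOf G
decreasing_by exact sizeOf_lt_of_mem_opts ‹_›

theorem eq_E_iff_opts_eq_nil {G : IGame} : G = E ↔ G.opts = [] := by
  cases G
  simp

end IGame

open IGame

theorem pPos_iff {G : IGame} : PPos G ↔ ∀ g ∈ G.opts, ¬ PPos g := by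
  cases G
  rw [PPos]
  simp

theorem ident_iff {G H : IGame} :
    Ident G H ↔ (∀ g ∈ G.opts, ∃ h ∈ H.opts, Ident g h) ∧ ∀ h ∈ H.opts, ∃ g ∈ G.opts, Ident g h := by
  cases G
  cases H
  rw [Ident]
  simp

theorem opts_addG (G H : IGame) :
    (addG G H).opts = G.opts.map (addG · H) ++ H.opts.map (addG G) := by
  cases G
  cases H
  rw [addG]
  simp

theorem split_ne_E {G : IGame} (hG : G ≠ E) (H : IGame) : split G H ≠ E := by
  obtain rfl | hH := eq_or_ne H E
  · rwa [split_E_right]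
  rw [Ne, eq_E_iff_opts_eq_nil, opts_split hG hH, List.append_eq_nil_iff, List.map_eq_nil_iff,
    List.map_eq_nil_iff]
  exact fun h => hG (eq_E_iff_opts_eq_nil.2 h.2)

theorem addG_ne_E_of_left {G : IGame} (hG : G ≠ E) (H : IGame) : addG G H ≠ E := by
  rw [Ne, eq_E_iff_opts_eq_nil, opts_addG, List.append_eq_nil_iff, List.map_eq_nil_iff]
  exact fun h => hG (eq_E_iff_opts_eq_nil.2 h.1)

theorem Ident.refl (G : IGame) : Ident G G := by
  induction G using optsInduction with
  | ind G ih => exact ident_iff.2 ⟨fun g hg => ⟨g, hg, ih g hg⟩, fun g hg => ⟨g, hg, ih g hg⟩⟩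

theorem Ident.symm {G H : IGame} (h : Ident G H) : Ident H G := by
  induction G using optsInduction generalizing H with
  | ind G ih =>
    obtain ⟨forth, back⟩ := ident_iff.1 h
    refine ident_iff.2 ⟨fun h hh => ?_, fun g hg => ?_⟩
    · obtain ⟨g, hg, hgh⟩ := back h hh
      exact ⟨g, hg, ih g hg hgh⟩
    · obtain ⟨h, hh, hgh⟩ := forth g hg
      exact ⟨h, hh, ih g hg hgh⟩

theorem Ident.eq_E_iff {G H : IGame} (h : Ident G H) : G = E ↔ H = E := by
  obtain ⟨forth, back⟩ := ident_iff.1 h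
  simp only [eq_E_iff_opts_eq_nil, List.eq_nil_iff_forall_not_mem]
  constructor
  · intro hG h hh
    obtain ⟨g, hg, -⟩ := back h hh
    exact hG g hg
  · intro hH g hg
    obtain ⟨h, hh, -⟩ := forth g hg
    exact hH h hh

theorem Ident.split {G G' H H' : IGame} (hG : Ident G G') (hH : Ident H H') :
    Ident (split G H) (split G' H') := by
  induction G using optsInduction generalizing G' H H' with
  | ind G ihG =>
  induction H using optsInduction generalizing H' with
  | ind H ihH =>
  obtain rfl | hG₀ := eq_or_ne G E
  · rw [hG.eq_E_iff.1 rfl, split_E_left, split_E_left]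
    exact Ident.refl E
  obtain rfl | hH₀ := eq_or_ne H E
  · rw [hH.eq_E_iff.1 rfl, split_E_right, split_E_right]
    exact hG
  obtain ⟨forthG, backG⟩ := ident_iff.1 hG
  obtain ⟨forthH, backH⟩ := ident_iff.1 hH
  rw [ident_iff, opts_split hG₀ hH₀, opts_split (mt hG.eq_E_iff.2 hG₀) (mt hH.eq_E_iff.2 hH₀)]
  simp only [List.mem_append, List.mem_map]
  constructor
  · rintro _ (⟨h, hh, rfl⟩ | ⟨g, hg, rfl⟩)
    · obtain ⟨h', hh', hhh'⟩ := forthH h hh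
      exact ⟨_, .inl ⟨h', hh', rfl⟩, ihH h hh hhh'⟩
    · obtain ⟨g', hg', hgg'⟩ := forthG g hg
      exact ⟨_, .inr ⟨g', hg', rfl⟩, ihG g hg hgg' hH⟩
  · rintro _ (⟨h', hh', rfl⟩ | ⟨g', hg', rfl⟩)
    · obtain ⟨h, hh, hhh'⟩ := backH h' hh'
      exact ⟨_, .inl ⟨h, hh, rfl⟩, ihH h hh hhh'⟩
    · obtain ⟨g, hg, hgg'⟩ := backG g' hg'
      exact ⟨_, .inr ⟨g, hg, rfl⟩, ihG g hg hgg' hH⟩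

theorem ident_addG_E_left (K : IGame) : Ident (addG E K) K := by
  induction K using optsInduction with
  | ind K ih =>
    rw [ident_iff, opts_addG]
    simp only [opts_mk, List.map_nil, List.nil_append, List.mem_map]
    constructor
    · rintro _ ⟨k, hk, rfl⟩
      exact ⟨k, hk, ih k hk⟩
    · intro k hk
      exact ⟨_, ⟨k, hk, rfl⟩, ih k hk⟩

theorem ident_addG_E_right (H : IGame) : Ident (addG H E) H := by
  induction H using optsInduction with
  | ind H ih =>
    rw [ident_iff, opts_addG]
    simp only [opts_mk, List.map_nil, List.append_nil, List.mem_map]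
    constructor
    · rintro _ ⟨h, hh, rfl⟩
      exact ⟨h, hh, ih h hh⟩
    · intro h hh
      exact ⟨_, ⟨h, hh, rfl⟩, ih h hh⟩

theorem pPos_addG_of_ident {G H : IGame} (h : Ident G H) : PPos (addG G H) := by
  induction G using optsInduction generalizing H with
  | ind G ih =>
    obtain ⟨forth, back⟩ := ident_iff.1 h
    rw [pPos_iff, opts_addG]
    simp only [List.mem_append, List.mem_map]
    rintro _ (⟨g, hg, rfl⟩ | ⟨h, hh, rfl⟩) hP <;> rw [pPos_iff, opts_addG] at hP
    · obtain ⟨h, hh, hgh⟩ := forth g hg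
      exact hP _ (List.mem_append_right _ (List.mem_map_of_mem hh)) (ih g hg hgh)
    · obtain ⟨g, hg, hgh⟩ := back h hh
      exact hP _ (List.mem_append_left _ (List.mem_map_of_mem hg)) (ih g hg hgh)

theorem ident_split_split_addG (G H K : IGame) :
    Ident (split (split G H) K) (split G (addG H K)) := by
  induction G using optsInduction generalizing H K with
  | ind G ihG =>
  induction H using optsInduction generalizing K with
  | ind H ihH =>
  induction K using optsInduction with
  | ind K ihK =>
  obtain rfl | hG := eq_or_ne G E
  · rw [split_E_left, split_E_left, split_E_left]
    exact Ident.refl E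
  obtain rfl | hH := eq_or_ne H E
  · rw [split_E_right]
    exact (Ident.refl G).split (ident_addG_E_left K).symm
  obtain rfl | hK := eq_or_ne K E
  · rw [split_E_right]
    exact (Ident.refl G).split (ident_addG_E_right H).symm
  rw [ident_iff, opts_split (split_ne_E hG H) hK, opts_split hG (addG_ne_E_of_left hH K),
    opts_split hG hH, opts_addG]
  simp only [List.mem_append, List.mem_map]
  constructor
  · rintro _ (⟨k, hk, rfl⟩ | ⟨_, ⟨h, hh, rfl⟩ | ⟨g, hg, rfl⟩, rfl⟩)
    · exact ⟨_, .inl ⟨_, .inr ⟨k, hk, rfl⟩, rfl⟩, ihK k hk⟩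
    · exact ⟨_, .inl ⟨_, .inl ⟨h, hh, rfl⟩, rfl⟩, ihH h hh K⟩
    · exact ⟨_, .inr ⟨g, hg, rfl⟩, ihG g hg H K⟩
  · rintro _ (⟨_, ⟨h, hh, rfl⟩ | ⟨k, hk, rfl⟩, rfl⟩ | ⟨g, hg, rfl⟩)
    · exact ⟨_, .inr ⟨_, .inl ⟨h, hh, rfl⟩, rfl⟩, ihH h hh K⟩
    · exact ⟨_, .inl ⟨k, hk, rfl⟩, ihK k hk⟩
    · exact ⟨_, .inr ⟨_, .inr ⟨g, hg, rfl⟩, rfl⟩, ihG g hg H K⟩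

/-- `(G ∘ H) ∘ K = G ∘ (H + K)`, i.e. their disjunctive sum is a
P-position. -/
theorem split_split_eq_split_add (G H K : IGame) :
    PPos (addG (split (split G H) K) (split G (addG H K))) :=
  pPos_addG_of_ident (ident_split_split_addG G H K)
end

section
/- If a finite impartial game G is nimber-like, then G is identical (as a game tree) to some nimber *n. -/
/-- `G` has hereditary transitivity: every option of an option of `G` is an
option of `G`. -/
def HerTrans (G : IGame) : Prop :=
  ∀ g ∈ G.opts, ∀ g' ∈ g.opts, g' ∈ G.opts

/-- `G` is nimber-like: it has hereditary transitivity and (recursively) so do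
all of its options and suboptions. -/
def NimberLike : IGame → Prop
  | .mk l => HerTrans (.mk l) ∧ ∀ g ∈ l.attach, NimberLike g.1
decreasing_by exact IGame.sizeOf_lt_of_mem g.2

/-! By induction every option of a nimber-like `G` is some nimber `*k`. Hereditary transitivity
makes the set of these `k` downward closed (an option `*j` of an option `*k` is again an option),
so it is `{0, …, n - 1}` for some `n` and `G` is `*n`. -/

lemma ident_mk_iff (gs hs : List IGame) : Ident (.mk gs) (.mk hs) ↔
    (∀ g ∈ gs, ∃ h ∈ hs, Ident g h) ∧ (∀ h ∈ hs, ∃ g ∈ gs, Ident g h) := by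
  rw [Ident]; simp

lemma nimberLike_mk_iff (gs : List IGame) : NimberLike (.mk gs) ↔
    HerTrans (.mk gs) ∧ ∀ g ∈ gs, NimberLike g := by
  rw [NimberLike]; simp

lemma ident_star_iff {G : IGame} {n : ℕ} : Ident G (star n) ↔
    (∀ g ∈ G.opts, ∃ k < n, Ident g (star k)) ∧ ∀ k < n, ∃ g ∈ G.opts, Ident g (star k) := by
  obtain ⟨gs⟩ := G
  rw [_root_.star, ident_mk_iff]
  simp [IGame.opts]

lemma HerTrans.exists_mem_opts_ident_star_of_lt {G g : IGame} (hG : HerTrans G)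
    (hg : g ∈ G.opts) {k j : ℕ} (hgk : Ident g (star k)) (hjk : j < k) :
    ∃ g' ∈ G.opts, Ident g' (star j) := by
  obtain ⟨g', hg', hg'j⟩ := (ident_star_iff.mp hgk).2 j hjk
  exact ⟨g', hG g hg g' hg', hg'j⟩

lemma HerTrans.exists_ident_star {G : IGame} (hG : HerTrans G)
    (hopts : ∀ g ∈ G.opts, ∃ k, Ident g (star k)) : ∃ n, Ident G (star n) := by
  classical
  choose! v hv using hopts
  refine ⟨G.opts.toFinset.sup (v · + 1), ident_star_iff.mpr ⟨fun g hg => ?_, fun k hk => ?_⟩⟩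
  · exact ⟨v g, Finset.le_sup (f := (v · + 1)) (List.mem_toFinset.mpr hg), hv g hg⟩
  · obtain ⟨g, hg, hkg⟩ := Finset.lt_sup_iff.mp hk
    rw [List.mem_toFinset] at hg
    rcases (Nat.lt_succ_iff.mp hkg).eq_or_lt with rfl | hkg
    · exact ⟨g, hg, hv g hg⟩
    · exact hG.exists_mem_opts_ident_star_of_lt hg (hv g hg) hkg

/-- every finite nimber-like game is (as a game tree) a nimber. -/
theorem nimberLike_is_nimber (G : IGame) (h : NimberLike G) :
    ∃ n : ℕ, Ident G (star n) :=
  match G, h with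
  | .mk gs, h => by
    rw [nimberLike_mk_iff] at h
    exact h.1.exists_ident_star fun g hg => nimberLike_is_nimber g (h.2 g hg)
decreasing_by exact IGame.sizeOf_lt_of_mem hg
end

section
/- For every impartial game G, applying the pass operator twice returns a game equal to G: (G*)* = G, i.e., (G*)* + G is a P-position. -/
/-! The options of `(G*)* + G` are `G* + G`, `g** + G` and `(G*)* + g` for options `g` of `G`.
The first has the option `G + G`, a P-position by the mirror strategy; the others have the
options `g** + g`, which are P-positions by induction. -/

namespace IGame

theorem opts_induction {P : IGame → Prop} (h : ∀ G, (∀ g ∈ G.opts, P g) → P G) :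
    ∀ G, P G
  | .mk l => h _ fun g (_ : g ∈ l) => opts_induction h g
termination_by G => sizeOf G
decreasing_by exact sizeOf_lt_of_mem ‹_›

theorem pPos_iff (G : IGame) : PPos G ↔ ∀ g ∈ G.opts, ¬PPos g := by
  cases G; rw [PPos]; simp [opts]

theorem not_pPos_of_mem {G g : IGame} (hg : g ∈ G.opts) (h : PPos g) : ¬PPos G :=
  fun hG => (pPos_iff G).1 hG g hg h

theorem opts_addG (G H : IGame) :
    (addG G H).opts = G.opts.map (addG · H) ++ H.opts.map (addG G ·) := by
  cases G; cases H; rw [addG]; simp [opts]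

theorem pPos_addG_iff (G H : IGame) :
    PPos (addG G H) ↔
      (∀ g ∈ G.opts, ¬PPos (addG g H)) ∧ ∀ h ∈ H.opts, ¬PPos (addG G h) := by
  simp [pPos_iff (addG G H), opts_addG, or_imp, forall_and]

theorem not_pPos_addG_of_mem_left {G g : IGame} (H : IGame) (hg : g ∈ G.opts)
    (h : PPos (addG g H)) : ¬PPos (addG G H) :=
  not_pPos_of_mem (by rw [opts_addG]; exact List.mem_append_left _ (List.mem_map_of_mem hg)) h

theorem not_pPos_addG_of_mem_right (G : IGame) {H h : IGame} (hh : h ∈ H.opts)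
    (h' : PPos (addG G h)) : ¬PPos (addG G H) :=
  not_pPos_of_mem (by rw [opts_addG]; exact List.mem_append_right _ (List.mem_map_of_mem hh)) h'

theorem pPos_addG_self : ∀ G : IGame, PPos (addG G G) :=
  opts_induction fun G ih => (pPos_addG_iff G G).2
    ⟨fun g hg => not_pPos_addG_of_mem_right g hg (ih g hg),
     fun g hg => not_pPos_addG_of_mem_left g hg (ih g hg)⟩

theorem pass_of_opts_eq_nil {G : IGame} (hG : G.opts = []) : pass G = G := by
  obtain ⟨⟩ := G
  cases hG
  unfold _root_.pass -- a bare `pass` would be ambiguous with `MonadWriter.pass`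
  rfl

theorem opts_pass {G : IGame} (hG : G.opts ≠ []) : (pass G).opts = G :: G.opts.map pass := by
  obtain ⟨_ | ⟨a, l⟩⟩ := G
  · exact absurd rfl hG
  · unfold _root_.pass
    simp [opts]

theorem mem_opts_pass_pass {G x : IGame} (hG : G.opts ≠ []) :
    x ∈ (pass (pass G)).opts ↔ x = pass G ∨ ∃ g ∈ G.opts, pass (pass g) = x := by
  have hG' : (pass G).opts ≠ [] := by simp [opts_pass hG]
  simp [opts_pass hG', opts_pass hG]

end IGame

open IGame in
/-- `(G*)* = G`, i.e. `(G*)* + G` is a P-position. -/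
theorem pass_pass_eq (G : IGame) : PPos (addG (pass (pass G)) G) := by
  induction G using opts_induction with
  | h G ih =>
  by_cases hG : G.opts = []
  · rw [pass_of_opts_eq_nil hG, pass_of_opts_eq_nil hG]
    exact pPos_addG_self G
  refine (pPos_addG_iff _ _).2 ⟨fun x hx => ?_, fun g hg => ?_⟩
  · rcases (mem_opts_pass_pass hG).1 hx with rfl | ⟨g, hg, rfl⟩
    · exact not_pPos_addG_of_mem_left G (by simp [opts_pass hG]) (pPos_addG_self G)
    · exact not_pPos_addG_of_mem_right _ hg (ih g hg)
  · exact not_pPos_addG_of_mem_left g ((mem_opts_pass_pass hG).2 (.inr ⟨g, hg, rfl⟩)) (ih g hg)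
end

section
/- (*1 ∘ E) ∘ *1 = *2 and *1 ∘ (E ∘ *1) = *1; hence in general (G ∘ H) ∘ K need not equal G ∘ (H ∘ K). -/
def ppos : IGame → Bool
  | .mk l => l.attach.all fun g => !ppos g.1
decreasing_by exact IGame.sizeOf_lt_of_mem g.2

theorem ppos_iff : ∀ g, PPos g ↔ ppos g = true
  | .mk l => by
    rw [PPos, ppos]
    simp only [List.all_eq_true, Bool.not_eq_true']
    refine forall₂_congr fun g hg => ?_
    rw [ppos_iff g.1]
    simp
decreasing_by exact IGame.sizeOf_lt_of_mem g.2

lemma st0 : _root_.star 0 = E := by rw [_root_.star.eq_1]; rfl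

lemma st1 : _root_.star 1 = IGame.mk [E] := by
  rw [_root_.star.eq_1]; simp [List.attach_map_val, List.range_succ, st0]

lemma st2 : _root_.star 2 = IGame.mk [E, IGame.mk [E]] := by
  rw [_root_.star.eq_1]; simp [List.attach_map_val, List.range_succ, st0, st1]

/-- `(*1 ∘ E) ∘ *1 = *2` and `*1 ∘ (E ∘ *1) = *1` (equality of
games: the sum is a P-position), demonstrating that in general
`(G ∘ H) ∘ K` need not equal `G ∘ (H ∘ K)`. -/
theorem split_assoc_counterexample :
    PPos (addG (split (split (star 1) E) (star 1)) (star 2)) ∧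
    PPos (addG (split (star 1) (split E (star 1))) (star 1)) ∧
    ∃ G H K : IGame, ¬ PPos (addG (split (split G H) K) (split G (split H K))) := by
  refine ⟨(ppos_iff _).mpr ?_, (ppos_iff _).mpr ?_, _root_.star 1, E, _root_.star 1, fun h => ?_⟩
  · simp [st1, st2, addG, split, ppos]
  · simp [st1, addG, split, ppos]
  · rw [ppos_iff] at h
    simp [st1, addG, split, ppos] at h
end

section
/- For any impartial games G and H and nimbers *m ≠ *n: it is impossible that both (G + *m) ∘ H and (G + *n) ∘ H are P-positions. -/
/-
If `X` is an option of `Y`, then `X ∘ H` is an option of `Y ∘ H`, so the two cannot both be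
P-positions. For `m < n` the game `*m` is an option of `*n`, hence `G + *m` is an option of
`G + *n`.
-/

namespace IGame

theorem PPos_mk_iff {l : List IGame} : PPos (.mk l) ↔ ∀ g ∈ l, ¬ PPos g := by
  rw [PPos]; simp

theorem not_PPos_of_mem_opts {G g : IGame} (hg : g ∈ G.opts) (hp : PPos g) : ¬ PPos G := by
  obtain ⟨l⟩ := G
  exact fun hG => PPos_mk_iff.mp hG g hg hp

theorem split_nil_right (G : IGame) : split G (.mk []) = G := by
  obtain ⟨_ | ⟨g, gs⟩⟩ := G
  · rw [split]
  · rw [split]; simp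

theorem opts_split_of_ne_nil {gs hs : List IGame} (hg : gs ≠ []) (hh : hs ≠ []) :
    (split (.mk gs) (.mk hs)).opts =
      (hs.map fun h => split (.mk gs) h) ++ gs.map fun g => split g (.mk hs) := by
  rw [split] <;> simp_all [IGame.opts]

theorem split_mem_opts_split {X Y : IGame} (H : IGame) (hXY : X ∈ Y.opts) :
    split X H ∈ (split Y H).opts := by
  obtain ⟨ys⟩ := Y
  simp only [IGame.opts] at hXY
  obtain ⟨_ | ⟨h, hs⟩⟩ := H
  · simpa only [split_nil_right, IGame.opts] using hXY
  · rw [opts_split_of_ne_nil (List.ne_nil_of_mem hXY) (List.cons_ne_nil h hs)]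
    exact List.mem_append_right _ (List.mem_map_of_mem hXY)

theorem addG_mem_opts_addG_right (G : IGame) {h H : IGame} (hH : h ∈ H.opts) :
    addG G h ∈ (addG G H).opts := by
  obtain ⟨gs⟩ := G
  obtain ⟨hs⟩ := H
  rw [addG]
  simpa [IGame.opts] using Or.inr ⟨h, hH, rfl⟩

theorem star_mem_opts_star {m n : ℕ} (hmn : m < n) : _root_.star m ∈ (_root_.star n).opts := by
  rw [_root_.star]
  simpa [IGame.opts] using ⟨m, hmn, rfl⟩

theorem not_PPos_split_and_PPos_split {X Y : IGame} (H : IGame) (hXY : X ∈ Y.opts) :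
    ¬ (PPos (split X H) ∧ PPos (split Y H)) :=
  fun ⟨hX, hY⟩ => not_PPos_of_mem_opts (split_mem_opts_split H hXY) hX hY

end IGame

/-- for nimbers `*m ≠ *n`, it is impossible that both
`(G + *m) ∘ H` and `(G + *n) ∘ H` are P-positions. -/
theorem not_both_PPos (G H : IGame) (m n : ℕ) (hmn : m ≠ n) :
    ¬ (PPos (split (addG G (star m)) H) ∧ PPos (split (addG G (star n)) H)) := by
  have of_lt : ∀ {a b : ℕ}, a < b →
      ¬ (PPos (split (addG G (star a)) H) ∧ PPos (split (addG G (star b)) H)) :=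
    fun hab => IGame.not_PPos_split_and_PPos_split H
      (IGame.addG_mem_opts_addG_right G (IGame.star_mem_opts_star hab))
  rcases hmn.lt_or_gt with hlt | hgt
  · exact of_lt hlt
  · exact fun ⟨hm, hn⟩ => of_lt hgt ⟨hn, hm⟩
end
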